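/- arXiv:2012.12846 — 2 statements merged into one kernel-verified Lean document; each statement's English description precedes it below -/
import Mathlib

section
/- In every 'corner region' C (a box exceeding S_min in three fixed directions, say +x, +y, +z), the portion of any maximal B-empty rectilinear region determines at most O(m) triples of supports: formally, if P ⊂ C has m points with pairwise distinct coordinates per axis, then the number of triples (p, q, r) ∈ P³ such that there exists an axis-aligned box T with one corner at the corner of S_min, whose interior avoids P, with p on the relative interior of its +x face, q on its +y face, and r on its +z face, and T maximal among such boxes, is at most a constant times m. -/
/-- The open axis-aligned box `(a,b)`. -/
def openBox (a b : Fin 3 → ℝ) : Set (Fin 3 → ℝ) :=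
  {x | ∀ i, a i < x i ∧ x i < b i}

/-- `T(c, t) = [c₁,t₁]×[c₂,t₂]×[c₃,t₃]` is a maximal empty box anchored at the corner
`c` inside the corner region with far corner `C'`: its interior avoids `P`, it lies in
the closed corner region, and no empty anchored box strictly contains it. -/
def MaxEmptyAnchored (P : Set (Fin 3 → ℝ)) (c C' t : Fin 3 → ℝ) : Prop :=
  (∀ i, c i < t i ∧ t i ≤ C' i) ∧ openBox c t ∩ P = ∅ ∧
  ¬ ∃ t' : Fin 3 → ℝ, (∀ i, c i < t' i ∧ t' i ≤ C' i) ∧ openBox c t' ∩ P = ∅ ∧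
    (∀ i, t i ≤ t' i) ∧ t ≠ t'

/-- If the open box is disjoint from `P`, no point of `P` can satisfy all six strict
coordinate inequalities. -/
lemma emp_block {P : Set (Fin 3 → ℝ)} {b₁ b₂ b₃ x y z : ℝ}
    (h : openBox ![b₁, b₂, b₃] ![x, y, z] ∩ P = ∅) {u : Fin 3 → ℝ} (hu : u ∈ P)
    (h1 : b₁ < u 0) (h2 : u 0 < x) (h3 : b₂ < u 1) (h4 : u 1 < y)
    (h5 : b₃ < u 2) (h6 : u 2 < z) : False := by
  have hmem : u ∈ openBox ![b₁, b₂, b₃] ![x, y, z] := by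
    simp only [openBox, Set.mem_setOf_eq]
    intro i
    fin_cases i <;> simp <;> constructor <;> assumption
  exact Set.eq_empty_iff_forall_notMem.mp h u ⟨hmem, hu⟩

/-- In every corner region `C = (b₁,B₁)×(b₂,B₂)×(b₃,B₃)` (exceeding `S_min` in the
`+x`, `+y`, `+z` directions), if `P = B ∩ C` has `m` points with pairwise distinct
coordinates per axis, then the number of triples `(p,q,r) ∈ P³` such that some maximal
`P`-empty box anchored at the corner `(b₁,b₂,b₃)` of `S_min` has `p` in the relative
interior of its `+x` face, `q` on its `+y` face and `r` on its `+z` face, is at most a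
constant times `m`. -/
theorem corner_region_support_triples_linear :
    ∃ C : ℕ, ∀ (b₁ b₂ b₃ B₁ B₂ B₃ : ℝ), b₁ < B₁ → b₂ < B₂ → b₃ < B₃ →
      ∀ (P : Set (Fin 3 → ℝ)) (m : ℕ), P.Finite → P.ncard = m →
      (∀ p ∈ P, (b₁ < p 0 ∧ p 0 < B₁) ∧ (b₂ < p 1 ∧ p 1 < B₂) ∧
        (b₃ < p 2 ∧ p 2 < B₃)) →
      (∀ p ∈ P, ∀ q ∈ P, p ≠ q → ∀ i : Fin 3, p i ≠ q i) →
      {pqr : (Fin 3 → ℝ) × (Fin 3 → ℝ) × (Fin 3 → ℝ) |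
          pqr.1 ∈ P ∧ pqr.2.1 ∈ P ∧ pqr.2.2 ∈ P ∧
          ∃ x y z : ℝ,
            MaxEmptyAnchored P ![b₁, b₂, b₃] ![B₁, B₂, B₃] ![x, y, z] ∧
            (pqr.1 0 = x ∧ b₂ < pqr.1 1 ∧ pqr.1 1 < y ∧ b₃ < pqr.1 2 ∧ pqr.1 2 < z) ∧
            (pqr.2.1 1 = y ∧ b₁ < pqr.2.1 0 ∧ pqr.2.1 0 < x ∧
              b₃ < pqr.2.1 2 ∧ pqr.2.1 2 < z) ∧
            (pqr.2.2 2 = z ∧ b₁ < pqr.2.2 0 ∧ pqr.2.2 0 < x ∧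
              b₂ < pqr.2.2 1 ∧ pqr.2.2 1 < y)}.ncard ≤ C * m := by
  refine ⟨2, ?_⟩
  intro b₁ b₂ b₃ B₁ B₂ B₃ _ _ _ P m hPfin hPcard hPC hdist
  set S : Set ((Fin 3 → ℝ) × (Fin 3 → ℝ) × (Fin 3 → ℝ)) :=
    {pqr : (Fin 3 → ℝ) × (Fin 3 → ℝ) × (Fin 3 → ℝ) |
          pqr.1 ∈ P ∧ pqr.2.1 ∈ P ∧ pqr.2.2 ∈ P ∧
          ∃ x y z : ℝ,
            MaxEmptyAnchored P ![b₁, b₂, b₃] ![B₁, B₂, B₃] ![x, y, z] ∧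
            (pqr.1 0 = x ∧ b₂ < pqr.1 1 ∧ pqr.1 1 < y ∧ b₃ < pqr.1 2 ∧ pqr.1 2 < z) ∧
            (pqr.2.1 1 = y ∧ b₁ < pqr.2.1 0 ∧ pqr.2.1 0 < x ∧
              b₃ < pqr.2.1 2 ∧ pqr.2.1 2 < z) ∧
            (pqr.2.2 2 = z ∧ b₁ < pqr.2.2 0 ∧ pqr.2.2 0 < x ∧
              b₂ < pqr.2.2 1 ∧ pqr.2.2 1 < y)} with hSdef
  -- basic coordinate bounds from hPC
  have hb : ∀ u ∈ P, b₁ < u 0 ∧ b₂ < u 1 ∧ b₃ < u 2 := by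
    intro u hu
    obtain ⟨⟨h1, _⟩, ⟨h2, _⟩, ⟨h3, _⟩⟩ := hPC u hu
    exact ⟨h1, h2, h3⟩
  -- the two halves
  set S₀ : Set ((Fin 3 → ℝ) × (Fin 3 → ℝ) × (Fin 3 → ℝ)) :=
    {T ∈ S | T.2.1 2 < T.1 2} with hS0def
  set S₁ : Set ((Fin 3 → ℝ) × (Fin 3 → ℝ) × (Fin 3 → ℝ)) :=
    {T ∈ S | T.1 2 < T.2.1 2} with hS1def
  have hcover : S ⊆ S₀ ∪ S₁ := by
    intro T hT
    obtain ⟨hp, hq, hr, x, y, z, hmax, h1, h2, h3⟩ := hT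
    have hpq : T.1 ≠ T.2.1 := by
      intro he
      have : T.2.1 0 < x := h2.2.2.1
      rw [← he, h1.1] at this
      exact lt_irrefl _ this
    have := hdist T.1 hp T.2.1 hq hpq 2
    rcases lt_or_gt_of_ne this with h | h
    · exact Or.inr ⟨⟨hp, hq, hr, x, y, z, hmax, h1, h2, h3⟩, h⟩
    · exact Or.inl ⟨⟨hp, hq, hr, x, y, z, hmax, h1, h2, h3⟩, h⟩
  have hSsub : S ⊆ P ×ˢ (P ×ˢ P) := by
    intro T hT
    exact ⟨hT.1, hT.2.1, hT.2.2.1⟩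
  have hSfin : S.Finite := (hPfin.prod (hPfin.prod hPfin)).subset hSsub
  have hS0fin : S₀.Finite := hSfin.subset (Set.sep_subset _ _)
  have hS1fin : S₁.Finite := hSfin.subset (Set.sep_subset _ _)
  -- injectivity on S₀ via T ↦ T.1
  have hinj0 : Set.InjOn (fun T => T.1) S₀ := by
    intro T hT T' hT' hpe
    obtain ⟨⟨hp, hq, hr, x, y, z, hmax, h1, h2, h3⟩, hc⟩ := hT
    obtain ⟨⟨hp', hq', hr', x', y', z', hmax', h1', h2', h3'⟩, hc'⟩ := hT'
    simp only at hpe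
    have hemp := hmax.2.1
    have hemp' := hmax'.2.1
    have hxx : x = x' := by rw [← h1.1, ← h1'.1, hpe]
    -- q = q'
    have hqq : T.2.1 = T'.2.1 := by
      by_contra hne
      have hne1 := hdist _ hq _ hq' hne 1
      rcases lt_or_gt_of_ne hne1 with h | h
      · -- q 1 = y < y' = q' 1 : q blocks T' in z
        have hq2z' : ¬ T.2.1 2 < z' := by
          intro hlt
          exact emp_block hemp' hq h2.2.1 (hxx ▸ h2.2.2.1)
            (hb _ hq).2.1 (lt_of_lt_of_eq h h2'.1) h2.2.2.2.1 hlt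
        -- p 2 < z' but q 2 < p 2 (case S₀) and z' ≤ q 2
        have hp2 : T.1 2 < z' := hpe ▸ h1'.2.2.2.2
        push_neg at hq2z'
        linarith [hc]
      · -- q' 1 = y' < y = q 1 : q' blocks T in z
        have hq2z : ¬ T'.2.1 2 < z := by
          intro hlt
          exact emp_block hemp hq' h2'.2.1 (hxx ▸ h2'.2.2.1)
            (hb _ hq').2.1 (lt_of_lt_of_eq h h2.1) h2'.2.2.2.1 hlt
        have hp2 : T.1 2 < z := h1.2.2.2.2
        push_neg at hq2z
        have hc2 : T'.2.1 2 < T.1 2 := hpe ▸ hc'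
        linarith
    -- now y = y'
    have hyy : y = y' := by rw [← h2.1, ← h2'.1, hqq]
    -- r = r'
    have hrr : T.2.2 = T'.2.2 := by
      by_contra hne
      have hne2 := hdist _ hr _ hr' hne 2
      rcases lt_or_gt_of_ne hne2 with h | h
      · exact emp_block hemp' hr h3.2.1 (hxx ▸ h3.2.2.1) h3.2.2.2.1
          (hyy ▸ h3.2.2.2.2) (hb _ hr).2.2 (h3'.1 ▸ h)
      · exact emp_block hemp hr' h3'.2.1 (hxx ▸ h3'.2.2.1) h3'.2.2.2.1
          (hyy ▸ h3'.2.2.2.2) (hb _ hr').2.2 (h3.1 ▸ h)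
    exact Prod.ext hpe (Prod.ext hqq hrr)
  -- injectivity on S₁ via T ↦ T.2.1
  have hinj1 : Set.InjOn (fun T => T.2.1) S₁ := by
    intro T hT T' hT' hqe
    obtain ⟨⟨hp, hq, hr, x, y, z, hmax, h1, h2, h3⟩, hc⟩ := hT
    obtain ⟨⟨hp', hq', hr', x', y', z', hmax', h1', h2', h3'⟩, hc'⟩ := hT'
    simp only at hqe
    have hemp := hmax.2.1
    have hemp' := hmax'.2.1
    have hyy : y = y' := by rw [← h2.1, ← h2'.1, hqe]
    -- p = p'
    have hpp : T.1 = T'.1 := by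
      by_contra hne
      have hne0 := hdist _ hp _ hp' hne 0
      rcases lt_or_gt_of_ne hne0 with h | h
      · -- p 0 < p' 0 = x' : p blocks T' in z
        have hp2z' : ¬ T.1 2 < z' := by
          intro hlt
          exact emp_block hemp' hp (hb _ hp).1 (h1'.1 ▸ h)
            h1.2.1 (hyy ▸ h1.2.2.1) h1.2.2.2.1 hlt
        have hq2 : T.2.1 2 < z' := hqe ▸ h2'.2.2.2.2
        push_neg at hp2z'
        linarith [hc]
      · -- p' 0 < p 0 = x : p' blocks T in z
        have hp2z : ¬ T'.1 2 < z := by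
          intro hlt
          exact emp_block hemp hp' (hb _ hp').1 (h1.1 ▸ h)
            h1'.2.1 (hyy ▸ h1'.2.2.1) h1'.2.2.2.1 hlt
        have hq2 : T.2.1 2 < z := h2.2.2.2.2
        push_neg at hp2z
        have hq2' : T.2.1 2 = T'.2.1 2 := congrFun hqe 2
        linarith [hc']
    have hxx : x = x' := by rw [← h1.1, ← h1'.1, hpp]
    have hrr : T.2.2 = T'.2.2 := by
      by_contra hne
      have hne2 := hdist _ hr _ hr' hne 2
      rcases lt_or_gt_of_ne hne2 with h | h
      · exact emp_block hemp' hr h3.2.1 (hxx ▸ h3.2.2.1) h3.2.2.2.1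
          (hyy ▸ h3.2.2.2.2) (hb _ hr).2.2 (h3'.1 ▸ h)
      · exact emp_block hemp hr' h3'.2.1 (hxx ▸ h3'.2.2.1) h3'.2.2.2.1
          (hyy ▸ h3'.2.2.2.2) (hb _ hr').2.2 (h3.1 ▸ h)
    exact Prod.ext hpp (Prod.ext hqe hrr)
  have h0card : S₀.ncard ≤ m := by
    rw [← hPcard]
    exact Set.ncard_le_ncard_of_injOn (fun T => T.1)
      (fun T hT => hT.1.1) hinj0 hPfin
  have h1card : S₁.ncard ≤ m := by
    rw [← hPcard]
    exact Set.ncard_le_ncard_of_injOn (fun T => T.2.1)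
      (fun T hT => hT.1.2.1) hinj1 hPfin
  calc S.ncard ≤ (S₀ ∪ S₁).ncard :=
        Set.ncard_le_ncard hcover (hS0fin.union hS1fin)
    _ ≤ S₀.ncard + S₁.ncard := Set.ncard_union_le _ _
    _ ≤ m + m := Nat.add_le_add h0card h1card
    _ = 2 * m := (Nat.two_mul m).symm
end

section
/- After discarding the blue points in the interior of S_min, the maximum-volume separating box problem reduces to a maximum empty box problem: the maximum-volume box containing R with fewest blue interior points equals the maximum-volume box S with S_min ⊆ S ⊆ S_max whose interior contains no point of B ∖ interior(S_min), where S_max is the maximal extension of S_min avoiding blue points in the side regions. -/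
/-- The closed axis-aligned box `[a,b]`. -/
def closedBox (a b : Fin 3 → ℝ) : Set (Fin 3 → ℝ) :=
  {x | ∀ i, a i ≤ x i ∧ x i ≤ b i}

/-- The volume of the box `[u,v]`. -/
noncomputable def vol (u v : Fin 3 → ℝ) : ℝ := ∏ i, (v i - u i)

/-- After discarding the `k` blue points interior to `S_min`, the maximum-volume
separating box problem reduces to a maximum empty box problem.  With
`B' = B ∖ interior(S_min)`: (1) a box `S ⊇ S_min` inside `W` has exactly `k` interior
blue points (the minimum possible) iff its interior contains no point of `B'`; and
(2) the maximum volume achievable by an `R`-containing box in `W` with the fewest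
interior blue points equals the maximum volume achievable by a box `S` with
`S_min ⊆ S ⊆ W` whose interior avoids `B'`. -/
theorem reduction_to_empty_box_problem
    (R B : Set (Fin 3 → ℝ)) (hR : R.Finite) (hB : B.Finite) (hRne : R.Nonempty)
    (w₁ w₂ : Fin 3 → ℝ) (hW : ∀ i, w₁ i ≤ w₂ i)
    (a b : Fin 3 → ℝ) (hab : ∀ i, a i ≤ b i)
    (hmin₁ : R ⊆ closedBox a b)
    (hmin₂ : ∀ c d : Fin 3 → ℝ, (∀ i, c i ≤ d i) → R ⊆ closedBox c d →
      closedBox a b ⊆ closedBox c d)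
    (hminW : closedBox a b ⊆ closedBox w₁ w₂)
    (B' : Set (Fin 3 → ℝ)) (hB' : B' = B \ openBox a b)
    (k : ℕ) (hk : k = (B ∩ openBox a b).ncard) :
    (∀ u v : Fin 3 → ℝ, (∀ i, u i ≤ v i) → closedBox a b ⊆ closedBox u v →
      closedBox u v ⊆ closedBox w₁ w₂ →
      ((B ∩ openBox u v).ncard = k ↔ openBox u v ∩ B' = ∅)) ∧
    sSup {r : ℝ | ∃ u v : Fin 3 → ℝ, (∀ i, u i ≤ v i) ∧ R ⊆ closedBox u v ∧
        closedBox u v ⊆ closedBox w₁ w₂ ∧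
        (∀ u' v' : Fin 3 → ℝ, (∀ i, u' i ≤ v' i) → R ⊆ closedBox u' v' →
          closedBox u' v' ⊆ closedBox w₁ w₂ →
          (B ∩ openBox u v).ncard ≤ (B ∩ openBox u' v').ncard) ∧
        r = vol u v} =
    sSup {r : ℝ | ∃ u v : Fin 3 → ℝ, (∀ i, u i ≤ v i) ∧
        closedBox a b ⊆ closedBox u v ∧ closedBox u v ⊆ closedBox w₁ w₂ ∧
        openBox u v ∩ B' = ∅ ∧ r = vol u v} := by
  -- basic monotonicity of boxes
  have hcomp : ∀ u v : Fin 3 → ℝ, closedBox a b ⊆ closedBox u v →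
      (∀ i, u i ≤ a i) ∧ (∀ i, b i ≤ v i) := by
    intro u v h
    have ha : a ∈ closedBox a b := fun i => ⟨le_refl _, hab i⟩
    have hb : b ∈ closedBox a b := fun i => ⟨hab i, le_refl _⟩
    exact ⟨fun i => (h ha i).1, fun i => (h hb i).2⟩
  have hopen : ∀ u v : Fin 3 → ℝ, closedBox a b ⊆ closedBox u v →
      openBox a b ⊆ openBox u v := by
    intro u v h x hx i
    obtain ⟨h1, h2⟩ := hcomp u v h
    exact ⟨lt_of_le_of_lt (h1 i) (hx i).1, lt_of_lt_of_le (hx i).2 (h2 i)⟩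
  -- key cardinality decomposition
  have key : ∀ u v : Fin 3 → ℝ, closedBox a b ⊆ closedBox u v →
      (B ∩ openBox u v).ncard = k + (openBox u v ∩ B').ncard := by
    intro u v h
    have hsub := hopen u v h
    have hdecomp : B ∩ openBox u v = (B ∩ openBox a b) ∪ (openBox u v ∩ B') := by
      ext x
      constructor
      · rintro ⟨hxB, hxuv⟩
        by_cases hxab : x ∈ openBox a b
        · exact Or.inl ⟨hxB, hxab⟩
        · exact Or.inr ⟨hxuv, by rw [hB']; exact ⟨hxB, hxab⟩⟩
      · rintro (⟨hxB, hxab⟩ | ⟨hxuv, hxB'⟩)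
        · exact ⟨hxB, hsub hxab⟩
        · rw [hB'] at hxB'; exact ⟨hxB'.1, hxuv⟩
    have hdisj : Disjoint (B ∩ openBox a b) (openBox u v ∩ B') := by
      rw [Set.disjoint_left]
      rintro x ⟨hxB, hxab⟩ ⟨hxuv, hxB'⟩
      rw [hB'] at hxB'
      exact hxB'.2 hxab
    have hf1 : (B ∩ openBox a b).Finite := hB.subset Set.inter_subset_left
    have hf2 : (openBox u v ∩ B').Finite := by
      rw [hB']; exact (hB.subset Set.diff_subset).subset Set.inter_subset_right
    rw [hdecomp, Set.ncard_union_eq hdisj hf1 hf2, hk]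
  have part1 : ∀ u v : Fin 3 → ℝ, (∀ i, u i ≤ v i) → closedBox a b ⊆ closedBox u v →
      closedBox u v ⊆ closedBox w₁ w₂ →
      ((B ∩ openBox u v).ncard = k ↔ openBox u v ∩ B' = ∅) := by
    intro u v _ h _
    rw [key u v h]
    have hf2 : (openBox u v ∩ B').Finite := by
      rw [hB']; exact (hB.subset Set.diff_subset).subset Set.inter_subset_right
    constructor
    · intro hkk
      have : (openBox u v ∩ B').ncard = 0 := by omega
      exact (Set.ncard_eq_zero hf2).mp this
    · intro he; rw [he, Set.ncard_empty]; omega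
  refine ⟨part1, ?_⟩
  congr 1
  ext r
  constructor
  · rintro ⟨u, v, huv, hRuv, hWuv, hopt, hr⟩
    have habuv : closedBox a b ⊆ closedBox u v := hmin₂ u v huv hRuv
    refine ⟨u, v, huv, habuv, hWuv, ?_, hr⟩
    rw [← part1 u v huv habuv hWuv]
    have hle : (B ∩ openBox u v).ncard ≤ k := by
      have := hopt a b hab hmin₁ hminW
      omega
    have hge := key u v habuv
    omega
  · rintro ⟨u, v, huv, habuv, hWuv, hemp, hr⟩
    have hRuv : R ⊆ closedBox u v := hmin₁.trans habuv
    refine ⟨u, v, huv, hRuv, hWuv, ?_, hr⟩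
    intro u' v' hu'v' hRu' hWu'
    have habu' : closedBox a b ⊆ closedBox u' v' := hmin₂ u' v' hu'v' hRu'
    have h1 : (B ∩ openBox u v).ncard = k := (part1 u v huv habuv hWuv).mpr hemp
    have h2 := key u' v' habu'
    omega
end
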